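/- For h(x) = 1{x ≤ t} with t > 0, the solution φ_h of the Fréchet Stein equation T_α φ = h - Eh(G) is given explicitly by α φ_h(x) = 1 - e^{-t^{-α}} if 0 < x ≤ t and α φ_h(x) = e^{-t^{-α}}(e^{x^{-α}} - 1) if x > t. -/

import Mathlib

open Real MeasureTheory Filter Set Topology

/-!
The Fréchet density `α y ^ (-α - 1) exp (-y ^ (-α))` is the derivative of
`Φ_α y = exp (-y ^ (-α))` on `(0, ∞)`, and `Φ_α` tends to `0` at `0⁺`. Hence the integral over
`(0, x)` of `(1{y ≤ t} - Φ_α t)` against the density is `Φ_α (min x t) - Φ_α t * Φ_α x`, and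
multiplying by `exp (x ^ (-α)) = (Φ_α x)⁻¹` gives both cases.
-/

theorem hasDerivAt_exp_neg_rpow_neg (α : ℝ) {y : ℝ} (hy : 0 < y) :
    HasDerivAt (fun y : ℝ => exp (-(y ^ (-α)))) (α * y ^ (-α - 1) * exp (-(y ^ (-α)))) y := by
  have := (hasDerivAt_rpow_const (p := -α) (Or.inl hy.ne')).fun_neg.exp
  convert this using 1
  ring

theorem tendsto_exp_neg_rpow_neg_nhdsGT_zero {α : ℝ} (hα : 0 < α) :
    Tendsto (fun y : ℝ => exp (-(y ^ (-α)))) (𝓝[>] 0) (𝓝 0) :=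
  tendsto_exp_atBot.comp (tendsto_neg_atTop_atBot.comp (tendsto_rpow_neg_nhdsGT_zero (by linarith)))

/-- The update is needed: `0 ^ (-α) = 0` in Lean, so the unmodified function is `1` at `0`. -/
theorem continuousOn_Icc_update_exp_neg_rpow_neg {α : ℝ} (hα : 0 < α) (x : ℝ) :
    ContinuousOn (Function.update (fun y : ℝ => exp (-(y ^ (-α)))) 0 0) (Icc 0 x) := by
  rw [continuousOn_update_iff, Icc_sdiff_left]
  refine ⟨fun y hy => (hasDerivAt_exp_neg_rpow_neg α hy.1).continuousAt.continuousWithinAt,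
    fun _ => (tendsto_exp_neg_rpow_neg_nhdsGT_zero hα).mono_left
      (nhdsWithin_mono _ Ioc_subset_Ioi_self)⟩

theorem hasDerivAt_update_exp_neg_rpow_neg (α : ℝ) {y : ℝ} (hy : 0 < y) :
    HasDerivAt (Function.update (fun y : ℝ => exp (-(y ^ (-α)))) 0 0)
      (α * y ^ (-α - 1) * exp (-(y ^ (-α)))) y := by
  refine (hasDerivAt_exp_neg_rpow_neg α hy).congr_of_eventuallyEq ?_
  filter_upwards [lt_mem_nhds hy] with z hz using Function.update_of_ne hz.ne' _ _

theorem integrableOn_Ioc_frechet_density {α : ℝ} (hα : 0 < α) (x : ℝ) :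
    IntegrableOn (fun y : ℝ => α * y ^ (-α - 1) * exp (-(y ^ (-α)))) (Ioc 0 x) :=
  intervalIntegral.integrableOn_deriv_of_nonneg (continuousOn_Icc_update_exp_neg_rpow_neg hα x)
    (fun _ hy => hasDerivAt_update_exp_neg_rpow_neg α hy.1)
    (fun y hy => by have := rpow_pos_of_pos hy.1 (-α - 1); positivity)

theorem integral_Ioc_frechet_density {α x : ℝ} (hα : 0 < α) (hx : 0 < x) :
    ∫ y in Ioc 0 x, α * y ^ (-α - 1) * exp (-(y ^ (-α))) = exp (-(x ^ (-α))) := by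
  rw [← intervalIntegral.integral_of_le hx.le,
    intervalIntegral.integral_eq_sub_of_hasDerivAt_of_le hx.le
      (continuousOn_Icc_update_exp_neg_rpow_neg hα x)
      (fun _ hy => hasDerivAt_update_exp_neg_rpow_neg α hy.1)
      ((intervalIntegrable_iff_integrableOn_Ioc_of_le hx.le).2
        (integrableOn_Ioc_frechet_density hα x))]
  simp [hx.ne']

theorem integral_Ioc_indicator_sub_mul_frechet_density {α x t : ℝ} (hα : 0 < α) (hx : 0 < x)
    (ht : 0 < t) (c : ℝ) :
    ∫ y in Ioc 0 x, ((if y ≤ t then 1 else 0) - c) * (α * y ^ (-α - 1) * exp (-(y ^ (-α))))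
      =
        exp (-(min x t ^ (-α))) - c * exp (-(x ^ (-α))) := by
  have hρ := integrableOn_Ioc_frechet_density hα x
  have hind : ∀ y, (if y ≤ t then (1 : ℝ) else 0) * (α * y ^ (-α - 1) * exp (-(y ^ (-α)))) =
      (Iic t).indicator (fun y => α * y ^ (-α - 1) * exp (-(y ^ (-α)))) y := fun y => by
    simp [indicator_apply]
  simp_rw [sub_mul, hind]
  rw [integral_sub (hρ.indicator measurableSet_Iic) (hρ.const_mul c), integral_const_mul,
    setIntegral_indicator measurableSet_Iic, Ioc_inter_Iic, integral_Ioc_frechet_density hα hx,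
    integral_Ioc_frechet_density hα (lt_min hx ht)]

theorem frechet_stein_solution_indicator (α : ℝ) (hα : 0 < α) (t : ℝ) (ht : 0 < t)
    (h : ℝ → ℝ) (hh : ∀ x : ℝ, h x = if x ≤ t then 1 else 0)
    (μh : ℝ) (hμh : μh = Real.exp (-(t ^ (-α))))
    (φh : ℝ → ℝ)
    (hφh : ∀ x : ℝ, 0 < x → φh x =
      Real.exp (x ^ (-α)) *
        ∫ y in Set.Ioo (0 : ℝ) x, (h y - μh) * y ^ (-α - 1) * Real.exp (-(y ^ (-α)))) :
    ∀ x : ℝ, 0 < x →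
      α * φh x =
        if x ≤ t then 1 - Real.exp (-(t ^ (-α)))
        else Real.exp (-(t ^ (-α))) * (Real.exp (x ^ (-α)) - 1) := by
  intro x hx
  have hintegrand : ∀ y, (h y - μh) * y ^ (-α - 1) * exp (-(y ^ (-α))) =
      α⁻¹ * (((if y ≤ t then 1 else 0) - μh) * (α * y ^ (-α - 1) * exp (-(y ^ (-α))))) := by
    intro y
    rw [hh]
    field_simp
  have hcancel : exp (x ^ (-α)) * exp (-(x ^ (-α))) = 1 := by
    rw [← exp_add, add_neg_cancel, exp_zero]
  rw [hφh x hx, ← integral_Ioc_eq_integral_Ioo]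
  simp_rw [hintegrand]
  rw [integral_const_mul, integral_Ioc_indicator_sub_mul_frechet_density hα hx ht, hμh]
  split_ifs with hxt
  · rw [min_eq_left hxt]
    field_simp
    linear_combination (1 - exp (-(t ^ (-α)))) * hcancel
  · rw [min_eq_right (le_of_not_ge hxt)]
    field_simp
    linear_combination -hcancel
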